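/- Let G be a finite connected simple graph on n vertices that is regular of degree r ≥ 2. Then for any starting vertices u (cop) and v (robber) in the cop-and-drunk game on G, there is a cop strategy (the greedy strategy, which at each step minimizes her distance to the robber's current position) whose expected capture time is at most r·diam(G)/2, which is strictly less than 3n/2 (using that an r-regular connected graph on n vertices has diameter at most (3n − r − 3)/(r + 1)). -/

import Mathlib

open scoped Classical ENNReal

/-! ## The cop-and-drunk game

A cop starts at `u`, a robber at `v`.  In each move the cop steps to an adjacent vertex
(seeing everything), then the robber steps to a uniformly random adjacent vertex.
A cop strategy is a function assigning to each finite history of play (equivalently, to the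
finite sequence of robber positions observed so far, which together with the strategy itself
determines the whole history) the cop's next vertex.  Capture occurs the first time the two
players occupy the same vertex, whether after the cop's step or after the robber's step, and
the capture time is the index of that move.  The expected capture time is computed as
`∑_{k≥0} P(T > k)` in `ℝ≥0∞`, where the probability of a robber trajectory is the product of
the transition weights `1/deg` of the simple random walk (so non-walk trajectories get
weight `0`). -/

/-- The cop's position after move `k`, given strategy `σ`, starting vertex `u`, and the
robber's trajectory `r` (the strategy sees the history `r 0, …, r (k-1)`). -/
def copPos {V : Type} (σ : List V → V) (u : V) (r : ℕ → V) : ℕ → V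
  | 0 => u
  | k + 1 => σ (List.ofFn fun i : Fin (k + 1) => r i)

/-- A strategy is valid for `G` if the cop always moves from her current vertex to an
adjacent vertex. -/
def ValidStrategy {V : Type} (G : SimpleGraph V) (σ : List V → V) (u : V) : Prop :=
  ∀ (r : ℕ → V) (k : ℕ), G.Adj (copPos σ u r k) (copPos σ u r (k + 1))

/-- The robber following trajectory `r` has been captured by the end of move `k`
(including capture at time `0` in case the two players start on the same vertex):
at some move `j ≤ k`, either the cop stepped onto the robber's current vertex, or the
robber stepped onto the cop's vertex. -/
def CapturedBy {V : Type} (σ : List V → V) (u : V) (r : ℕ → V) (k : ℕ) : Prop :=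
  r 0 = u ∨ ∃ j, 1 ≤ j ∧ j ≤ k ∧ (copPos σ u r j = r (j - 1) ∨ copPos σ u r j = r j)

/-- Probability weight of the first `k` steps of the trajectory `r` for the simple random
walk on `G`: the product of `1/deg` over the steps, and `0` if some step is not an edge. -/
noncomputable def pathWt {V : Type} [Fintype V] (G : SimpleGraph V) (r : ℕ → V) (k : ℕ) :
    ℝ≥0∞ :=
  ∏ i ∈ Finset.range k, if G.Adj (r i) (r (i + 1)) then ((G.degree (r i) : ℝ≥0∞))⁻¹ else 0

/-- Extend a finite trajectory to an infinite one (constant after time `k`). -/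
def pad {V : Type} (k : ℕ) (q : Fin (k + 1) → V) : ℕ → V :=
  fun i => q ⟨min i k, Nat.lt_succ_of_le (Nat.min_le_right i k)⟩

/-- The probability that the robber, starting at `v` and performing a simple random walk on
`G`, survives (is not yet captured) through the end of move `k`, against the cop playing
strategy `σ` from `u`. -/
noncomputable def survival {V : Type} [Fintype V] (G : SimpleGraph V) (σ : List V → V)
    (u v : V) (k : ℕ) : ℝ≥0∞ :=
  ∑ q : Fin (k + 1) → V,
    if q 0 = v ∧ ¬ CapturedBy σ u (pad k q) k then pathWt G (pad k q) k else 0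

/-- The expected capture time `E[T] = ∑_{k ≥ 0} P(T > k)` of the cop-and-drunk game on `G`,
with the cop starting at `u` playing strategy `σ` and the robber starting at `v`. -/
noncomputable def expCaptureTime {V : Type} [Fintype V] (G : SimpleGraph V) (σ : List V → V)
    (u v : V) : ℝ≥0∞ :=
  ∑' k : ℕ, survival G σ u v k

/-! The greedy cop steps along a geodesic towards the robber, so her step lowers the distance
`d` by one. The robber's random step then raises it by at most one, but one of his `r`
neighbours is two steps closer to the cop (unless he is caught). Hence the expected distance on
the survival event, `φ k`, satisfies `r φ (k + 1) + 2 P(T > k) ≤ r φ k`, and summing over `k`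
gives `2 E[T] ≤ r φ 0 ≤ r diam G`. For the second bound, the closed neighbourhoods of every third
vertex on a diametral geodesic are disjoint sets of `r + 1` vertices, so
`(⌊diam G / 3⌋ + 1)(r + 1) ≤ n`. -/

namespace SimpleGraph

open Finset

variable {V : Type} {G : SimpleGraph V}

lemma Reachable.exists_adj_dist_add_one_eq {a b : V} (hab : G.Reachable a b) (hne : a ≠ b) :
    ∃ c, G.Adj a c ∧ G.dist c b + 1 = G.dist a b := by
  obtain ⟨p, hp⟩ := hab.exists_walk_length_eq_dist
  cases p with
  | nil => exact absurd rfl hne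
  | @cons _ c _ hadj q =>
    refine ⟨c, hadj, le_antisymm ?_ ?_⟩
    · simpa [← hp] using dist_le q
    · calc G.dist a b ≤ G.dist a c + G.dist c b := hadj.reachable.dist_triangle_left b
        _ = G.dist c b + 1 := by rw [dist_eq_one_iff_adj.mpr hadj, add_comm]

lemma dist_le_dist_add_one_of_adj {a c x : V} (hadj : G.Adj a x) :
    G.dist c x ≤ G.dist c a + 1 := by
  simpa [dist_eq_one_iff_adj.mpr hadj] using hadj.reachable.dist_triangle_right c

lemma Walk.sub_le_dist_getVert {a b : V} (p : G.Walk a b) (hp : p.length = G.dist a b) {i j : ℕ}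
    (hij : i ≤ j) (hj : j ≤ p.length) : j - i ≤ G.dist (p.getVert i) (p.getVert j) := by
  have h₁ : G.dist a (p.getVert i) ≤ i := (dist_le (p.take i)).trans (by simp [take_length])
  have h₂ : G.dist (p.getVert j) b ≤ p.length - j :=
    (dist_le (p.drop j)).trans (by simp [drop_length])
  have h₃ : G.dist a b ≤ G.dist a (p.getVert i) + G.dist (p.getVert i) b :=
    Reachable.dist_triangle_left ⟨p.take i⟩ b
  have h₄ : G.dist (p.getVert i) b
      ≤ G.dist (p.getVert i) (p.getVert j) + G.dist (p.getVert j) b :=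
    Reachable.dist_triangle_right ⟨p.drop j⟩ _
  omega

variable [Fintype V]

/-- One neighbour of `a` is two steps closer to `c` than the bound `dist c a + 1`. -/
lemma sum_dist_neighbor_add_two_le {a c : V} (hca : G.Reachable c a) (hne : c ≠ a) :
    ∑ x ∈ G.neighborFinset a, G.dist c x + 2 ≤ G.degree a * (G.dist c a + 1) := by
  obtain ⟨x₀, hadj₀, hx₀⟩ := hca.symm.exists_adj_dist_add_one_eq hne.symm
  rw [dist_comm, dist_comm (u := a)] at hx₀
  have hmem₀ : x₀ ∈ G.neighborFinset a := (mem_neighborFinset _ _ _).mpr hadj₀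
  have hrest : ∑ x ∈ (G.neighborFinset a).erase x₀, G.dist c x
      ≤ (G.degree a - 1) * (G.dist c a + 1) := by
    rw [← card_neighborFinset_eq_degree, ← card_erase_of_mem hmem₀]
    exact sum_le_card_nsmul _ _ _ fun x hx =>
      dist_le_dist_add_one_of_adj ((mem_neighborFinset _ _ _).mp (mem_of_mem_erase hx))
  obtain ⟨δ, hδ⟩ := Nat.exists_eq_add_of_le' (card_pos.mpr ⟨x₀, hmem₀⟩)
  rw [card_neighborFinset_eq_degree] at hδ
  rw [hδ, Nat.add_sub_cancel] at hrest
  rw [← add_sum_erase _ _ hmem₀, hδ]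
  linarith

lemma diam_div_three_add_one_mul_le_card (hconn : G.Connected) :
    (G.diam / 3 + 1) * (G.minDegree + 1) ≤ Fintype.card V := by
  have := hconn.nonempty
  obtain ⟨a, b, hab⟩ := G.exists_dist_eq_diam
  obtain ⟨p, hp⟩ := hconn.exists_walk_length_eq_dist a b
  set m := G.diam / 3
  let w (i : ℕ) := p.getVert (3 * i)
  let ball (x : V) := insert x (G.neighborFinset x)
  have hball {x y : V} (hy : y ∈ ball x) : G.dist x y ≤ 1 := by
    rcases Finset.mem_insert.mp hy with rfl | hy
    · simp
    · exact (dist_eq_one_iff_adj.mpr ((mem_neighborFinset _ _ _).mp hy)).le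
  have hfar {i j : ℕ} (hij : i < j) (hj : j ≤ m) : 3 ≤ G.dist (w i) (w j) :=
    le_trans (by omega) (p.sub_le_dist_getVert hp (i := 3 * i) (j := 3 * j) (by omega) (by omega))
  have hdisj : Set.PairwiseDisjoint (Finset.range (m + 1) : Set ℕ) (ball ∘ w) := by
    intro i hi j hj hne
    simp only [Finset.coe_range, Set.mem_Iio] at hi hj
    refine Finset.disjoint_left.mpr fun y hyi hyj => ?_
    have hclose : G.dist (w i) (w j) ≤ 2 := calc
      G.dist (w i) (w j) ≤ G.dist (w i) y + G.dist y (w j) := hconn.dist_triangle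
      _ ≤ 1 + 1 := add_le_add (hball hyi) (dist_comm.trans_le (hball hyj))
    rcases Nat.lt_or_gt_of_ne hne with h | h
    · have := hfar h (by omega); omega
    · have := hfar h (by omega); rw [dist_comm] at this; omega
  have hcard (x : V) : G.minDegree + 1 ≤ (ball x).card := by
    rw [Finset.card_insert_of_notMem (notMem_neighborFinset_self _ _),
      card_neighborFinset_eq_degree]
    exact Nat.succ_le_succ (G.minDegree_le_degree x)
  calc (m + 1) * (G.minDegree + 1) ≤ ∑ i ∈ Finset.range (m + 1), (ball (w i)).card := by
        simpa using Finset.card_nsmul_le_sum (Finset.range (m + 1)) _ _ fun i _ => hcard (w i)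
    _ = ((Finset.range (m + 1)).biUnion (ball ∘ w)).card := (Finset.card_biUnion hdisj).symm
    _ ≤ Fintype.card V := Finset.card_le_univ _

end SimpleGraph

lemma ENNReal.tsum_le_of_add_le {φ s : ℕ → ℝ≥0∞} (h : ∀ k, φ (k + 1) + s k ≤ φ k) :
    ∑' k, s k ≤ φ 0 := by
  have hpartial (K : ℕ) : ∑ k ∈ Finset.range K, s k + φ K ≤ φ 0 := by
    induction K with
    | zero => simp
    | succ K ih => calc
        ∑ k ∈ Finset.range (K + 1), s k + φ (K + 1)
            = ∑ k ∈ Finset.range K, s k + (φ (K + 1) + s K) := by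
          rw [Finset.sum_range_succ]; ring
        _ ≤ φ 0 := le_trans (by gcongr; exact h K) ih
  exact ENNReal.tsum_le_of_sum_range_le fun K => le_self_add.trans (hpartial K)

namespace CopDrunk

open SimpleGraph

variable {V : Type}

section Capture

variable {σ : List V → V} {u : V}

lemma copPos_congr {r₁ r₂ : ℕ → V} {j : ℕ} (h : ∀ i < j, r₁ i = r₂ i) :
    copPos σ u r₁ j = copPos σ u r₂ j := by
  cases j with
  | zero => rfl
  | succ k =>
    simp only [copPos]
    congr 2
    exact funext fun i => h i i.isLt

lemma capturedBy_congr {r₁ r₂ : ℕ → V} {k : ℕ} (h : ∀ i ≤ k, r₁ i = r₂ i) :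
    CapturedBy σ u r₁ k ↔ CapturedBy σ u r₂ k := by
  refine or_congr (by rw [h 0 k.zero_le])
    (exists_congr fun j => and_congr_right fun _ => and_congr_right fun hjk => ?_)
  rw [copPos_congr fun i hi => h i (by omega), h j hjk, h (j - 1) (by omega)]

lemma capturedBy_succ_iff {r : ℕ → V} {k : ℕ} :
    CapturedBy σ u r (k + 1) ↔ CapturedBy σ u r k ∨
      copPos σ u r (k + 1) = r k ∨ copPos σ u r (k + 1) = r (k + 1) := by
  simp only [CapturedBy]
  constructor
  · rintro (h0 | ⟨j, hj1, hjk, hcap⟩)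
    · exact Or.inl (Or.inl h0)
    · rcases Nat.lt_or_ge j (k + 1) with hj | hj
      · exact Or.inl (Or.inr ⟨j, hj1, by omega, hcap⟩)
      · obtain rfl : j = k + 1 := by omega
        exact Or.inr hcap
  · rintro ((h0 | ⟨j, hj1, hjk, hcap⟩) | hcap)
    · exact Or.inl h0
    · exact Or.inr ⟨j, hj1, by omega, hcap⟩
    · exact Or.inr ⟨k + 1, by omega, le_rfl, hcap⟩

lemma copPos_ne_of_not_capturedBy {r : ℕ → V} {k : ℕ} (h : ¬ CapturedBy σ u r k) :
    copPos σ u r k ≠ r k := by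
  intro heq
  apply h
  cases k with
  | zero => exact Or.inl heq.symm
  | succ m => exact Or.inr ⟨m + 1, by omega, le_rfl, Or.inr heq⟩

end Capture

lemma copPos_foldl_succ (step : V → V → V) (u : V) (r : ℕ → V) (k : ℕ) :
    copPos (List.foldl step u) u r (k + 1) = step (copPos (List.foldl step u) u r k) (r k) := by
  cases k with
  | zero => rfl
  | succ k =>
    simp only [copPos]
    rw [List.ofFn_succ', List.concat_eq_append, List.foldl_append]
    rfl

lemma validStrategy_foldl {G : SimpleGraph V} {step : V → V → V}
    (hstep : ∀ a b, G.Adj a (step a b)) (u : V) : ValidStrategy G (List.foldl step u) u := by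
  intro r k
  rw [copPos_foldl_succ]
  exact hstep _ _

def splice (r : ℕ → V) (k : ℕ) (x : V) : ℕ → V := fun i => if i ≤ k then r i else x

lemma pad_succ_snoc {k : ℕ} (q : Fin (k + 1) → V) (x : V) :
    pad (k + 1) (Fin.snoc q x) = splice (pad k q) k x := by
  funext i
  simp only [pad, splice, Fin.snoc]
  split_ifs <;> first | rfl | omega | skip
  simp only [cast_eq]
  congr 1
  ext
  simp only [Fin.val_castLT]
  omega

lemma splice_of_le {r : ℕ → V} {k i : ℕ} (x : V) (h : i ≤ k) : splice r k x i = r i :=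
  if_pos h

lemma splice_succ (r : ℕ → V) (k : ℕ) (x : V) : splice r k x (k + 1) = x := if_neg (by omega)

lemma copPos_splice_succ (σ : List V → V) (u : V) (r : ℕ → V) (k : ℕ) (x : V) :
    copPos σ u (splice r k x) (k + 1) = copPos σ u r (k + 1) :=
  copPos_congr fun _ hi => splice_of_le x (by omega)

lemma capturedBy_splice_succ_iff {σ : List V → V} {u : V} {r : ℕ → V} {k : ℕ} {x : V} :
    CapturedBy σ u (splice r k x) (k + 1) ↔ CapturedBy σ u r k ∨
      copPos σ u r (k + 1) = r k ∨ copPos σ u r (k + 1) = x := by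
  rw [capturedBy_succ_iff, capturedBy_congr fun _ hi => splice_of_le x hi,
    copPos_splice_succ, splice_of_le x le_rfl, splice_succ]

section Greedy

variable (G : SimpleGraph V)

/-- The guard `a ≠ b → …` keeps the cop moving after capture, as a valid strategy must. -/
noncomputable def greedyStep (a b : V) : V :=
  if h : ∃ c, G.Adj a c ∧ (a ≠ b → G.dist c b + 1 = G.dist a b) then h.choose else a

noncomputable abbrev greedy (u : V) : List V → V := List.foldl (greedyStep G) u

variable {G}

lemma greedyStep_spec (hconn : G.Connected) {a : V} (ha : ∃ c, G.Adj a c) (b : V) :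
    G.Adj a (greedyStep G a b) ∧ (a ≠ b → G.dist (greedyStep G a b) b + 1 = G.dist a b) := by
  have h : ∃ c, G.Adj a c ∧ (a ≠ b → G.dist c b + 1 = G.dist a b) := by
    rcases eq_or_ne a b with rfl | hab
    · obtain ⟨c, hc⟩ := ha
      exact ⟨c, hc, fun h => absurd rfl h⟩
    · obtain ⟨c, hc, hd⟩ := (hconn a b).exists_adj_dist_add_one_eq hab
      exact ⟨c, hc, fun _ => hd⟩
  rw [greedyStep, dif_pos h]
  exact h.choose_spec

lemma validStrategy_greedy (hconn : G.Connected) (hadj : ∀ a, ∃ c, G.Adj a c) (u : V) :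
    ValidStrategy G (greedy G u) u :=
  validStrategy_foldl (fun a b => (greedyStep_spec hconn (hadj a) b).1) u

end Greedy

variable [Fintype V] (G : SimpleGraph V)

noncomputable def stepWt (a x : V) : ℝ≥0∞ := if G.Adj a x then (G.degree a : ℝ≥0∞)⁻¹ else 0

noncomputable def copRobberDist (σ : List V → V) (u : V) (k : ℕ) (r : ℕ → V) : ℝ≥0∞ :=
  G.dist (copPos σ u r k) (r k)

/-- `E[f(R); T > k]` for the robber's trajectory `R`. -/
noncomputable def survivalExpect (σ : List V → V) (u v : V) (k : ℕ) (f : (ℕ → V) → ℝ≥0∞) :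
    ℝ≥0∞ :=
  ∑ q : Fin (k + 1) → V,
    if q 0 = v ∧ ¬ CapturedBy σ u (pad k q) k then pathWt G (pad k q) k * f (pad k q) else 0

variable {G}

/-- Here `c` is the cop after her step and `a` the robber; the `0` branches are capture. -/
lemma degree_mul_sum_stepWt_dist_add_two_le {a c : V} (hca : G.Reachable c a)
    (hdeg : 2 ≤ G.degree a) :
    (G.degree a : ℝ≥0∞) * ∑ x, (if c = a ∨ c = x then 0 else stepWt G a x * G.dist c x) + 2
      ≤ G.degree a * (G.dist c a + 1) := by
  by_cases hne : c = a
  · subst hne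
    simpa using (Nat.cast_le (α := ℝ≥0∞)).mpr hdeg
  have hdeg₀ : (G.degree a : ℝ≥0∞) ≠ 0 := by exact_mod_cast (by omega : G.degree a ≠ 0)
  have hterm (x : V) : (G.degree a : ℝ≥0∞) *
      (if c = a ∨ c = x then 0 else stepWt G a x * G.dist c x)
        ≤ if G.Adj a x then (G.dist c x : ℝ≥0∞) else 0 := by
    by_cases hx : c = x
    · simp [hx]
    · simp only [hne, hx, or_self, if_false, stepWt]
      split_ifs
      · rw [← mul_assoc, ENNReal.mul_inv_cancel hdeg₀ (ENNReal.natCast_ne_top _), one_mul]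
      · simp
  have hnat := sum_dist_neighbor_add_two_le hca hne
  calc (G.degree a : ℝ≥0∞) * ∑ x, (if c = a ∨ c = x then 0 else stepWt G a x * G.dist c x) + 2
      ≤ ∑ x ∈ G.neighborFinset a, (G.dist c x : ℝ≥0∞) + 2 := by
        rw [Finset.mul_sum, neighborFinset_eq_filter, Finset.sum_filter]
        gcongr with x
        exact hterm x
    _ ≤ G.degree a * (G.dist c a + 1) := by exact_mod_cast hnat

lemma pathWt_splice (r : ℕ → V) (k : ℕ) (x : V) :
    pathWt G (splice r k x) (k + 1) = pathWt G r k * stepWt G (r k) x := by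
  rw [pathWt, Finset.prod_range_succ, splice_of_le x le_rfl, splice_succ]
  congr 1
  refine Finset.prod_congr rfl fun i hi => ?_
  rw [Finset.mem_range] at hi
  rw [splice_of_le x hi.le, splice_of_le x hi]

section Expect

variable {σ : List V → V} {u v : V} {k : ℕ}

lemma survival_eq_survivalExpect_one : survival G σ u v k = survivalExpect G σ u v k 1 := by
  simp only [survival, survivalExpect, Pi.one_apply, mul_one]

lemma survivalExpect_add (f g : (ℕ → V) → ℝ≥0∞) :
    survivalExpect G σ u v k (f + g) = survivalExpect G σ u v k f + survivalExpect G σ u v k g := by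
  rw [survivalExpect, survivalExpect, survivalExpect, ← Finset.sum_add_distrib]
  refine Finset.sum_congr rfl fun q _ => ?_
  split_ifs <;> simp [mul_add]

lemma survivalExpect_const_mul (c : ℝ≥0∞) (f : (ℕ → V) → ℝ≥0∞) :
    survivalExpect G σ u v k (fun r => c * f r) = c * survivalExpect G σ u v k f := by
  rw [survivalExpect, survivalExpect, Finset.mul_sum]
  refine Finset.sum_congr rfl fun q _ => ?_
  split_ifs <;> ring

lemma survivalExpect_mono {f g : (ℕ → V) → ℝ≥0∞} (h : ∀ r, ¬ CapturedBy σ u r k → f r ≤ g r) :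
    survivalExpect G σ u v k f ≤ survivalExpect G σ u v k g := by
  refine Finset.sum_le_sum fun q _ => ?_
  split_ifs with hq
  · exact mul_le_mul_right (h _ hq.2) _
  · exact le_rfl

lemma survivalExpect_zero_le (f : (ℕ → V) → ℝ≥0∞) :
    survivalExpect G σ u v 0 f ≤ f fun _ => v := by
  rw [survivalExpect, ← (Equiv.funUnique (Fin 1) V).symm.sum_comp]
  calc _ ≤ ∑ x : V, if x = v then f (fun _ => v) else 0 := Finset.sum_le_sum fun x _ => ?_
    _ = f fun _ => v := by simp
  split_ifs with h₁ h₂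
  · subst h₂
    rw [pathWt, Finset.prod_range_zero, one_mul]
    exact le_rfl
  · exact absurd h₁.1 h₂
  · exact zero_le
  · exact le_rfl

lemma survivalExpect_succ (f : (ℕ → V) → ℝ≥0∞) :
    survivalExpect G σ u v (k + 1) f = survivalExpect G σ u v k fun r => ∑ x,
      if copPos σ u r (k + 1) = r k ∨ copPos σ u r (k + 1) = x then 0
      else stepWt G (r k) x * f (splice r k x) := by
  rw [survivalExpect, ← (Fin.snocEquiv fun _ => V).sum_comp, Fintype.sum_prod_type,
    Finset.sum_comm, survivalExpect]
  refine Finset.sum_congr rfl fun q _ => ?_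
  have hzero (x : V) : (Fin.snoc q x : Fin (k + 2) → V) 0 = q 0 :=
    Fin.snoc_castSucc (α := fun _ => V) (i := 0) x q
  simp only [Fin.snocEquiv, Equiv.coe_fn_mk, pad_succ_snoc, capturedBy_splice_succ_iff,
    pathWt_splice, hzero, not_or]
  split_ifs with hq
  · rw [Finset.mul_sum]
    refine Finset.sum_congr rfl fun x _ => ?_
    split_ifs <;> simp_all [mul_assoc]
  · exact Finset.sum_eq_zero fun x _ => if_neg fun h => hq ⟨h.1, h.2.1⟩

end Expect

lemma greedy_drift (hconn : G.Connected) {r : ℕ} (hreg : G.IsRegularOfDegree r) (hr : 2 ≤ r)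
    (u v : V) (k : ℕ) :
    r * survivalExpect G (greedy G u) u v (k + 1) (copRobberDist G (greedy G u) u (k + 1))
        + 2 * survival G (greedy G u) u v k
      ≤ r * survivalExpect G (greedy G u) u v k (copRobberDist G (greedy G u) u k) := by
  rw [survivalExpect_succ, survival_eq_survivalExpect_one, ← survivalExpect_const_mul,
    ← survivalExpect_const_mul, ← survivalExpect_const_mul, ← survivalExpect_add]
  refine survivalExpect_mono fun ρ hρ => ?_
  simp only [Pi.add_apply, Pi.one_apply, mul_one, copRobberDist, copPos_splice_succ, splice_succ,
    copPos_foldl_succ]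
  set cop := copPos (greedy G u) u ρ k
  have hadj : ∃ c, G.Adj cop c := (G.degree_pos_iff_exists_adj cop).mp (by rw [hreg]; omega)
  have hd := (greedyStep_spec hconn hadj (ρ k)).2 (copPos_ne_of_not_capturedBy hρ)
  have key := degree_mul_sum_stepWt_dist_add_two_le (hconn (greedyStep G cop (ρ k)) (ρ k))
    (hreg (ρ k) ▸ hr)
  rw [hreg (ρ k)] at key
  rw [← hd, Nat.cast_add, Nat.cast_one]
  exact key

lemma two_mul_expCaptureTime_greedy_le (hconn : G.Connected) {r : ℕ}
    (hreg : G.IsRegularOfDegree r) (hr : 2 ≤ r) (u v : V) :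
    2 * expCaptureTime G (greedy G u) u v ≤ r * G.dist u v := by
  rw [expCaptureTime, ← ENNReal.tsum_mul_left]
  calc ∑' k, 2 * survival G (greedy G u) u v k
      ≤ r * survivalExpect G (greedy G u) u v 0 (copRobberDist G (greedy G u) u 0) :=
        ENNReal.tsum_le_of_add_le (greedy_drift hconn hreg hr u v)
    _ ≤ r * G.dist u v := by gcongr; exact survivalExpect_zero_le _

end CopDrunk

/-- On a connected `r`-regular graph on `n` vertices (`r ≥ 2`), for any starting vertices
`u` (cop) and `v` (robber), some valid cop strategy (the greedy one) has expected capture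
time at most `r·diam(G)/2`, and this quantity is strictly less than `3n/2` (using that a
connected `r`-regular graph on `n` vertices has diameter at most `(3n − r − 3)/(r + 1)`). -/
theorem regular_expected_capture_time_le {V : Type} [Fintype V] (G : SimpleGraph V)
    (n r : ℕ) (hr : 2 ≤ r) (hcard : Fintype.card V = n) (hconn : G.Connected)
    (hreg : G.IsRegularOfDegree r) (u v : V) :
    (∃ σ : List V → V, ValidStrategy G σ u ∧
        expCaptureTime G σ u v ≤ ENNReal.ofReal ((r : ℝ) * (G.diam : ℝ) / 2)) ∧
      (r : ℝ) * (G.diam : ℝ) / 2 < 3 * n / 2 := by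
  have := hconn.nonempty
  have hadj (a : V) : ∃ c, G.Adj a c := (G.degree_pos_iff_exists_adj a).mp (by rw [hreg]; omega)
  refine ⟨⟨CopDrunk.greedy G u, CopDrunk.validStrategy_greedy hconn hadj u, ?_⟩, ?_⟩
  · have hdist : G.dist u v ≤ G.diam :=
      SimpleGraph.dist_le_diam (SimpleGraph.connected_iff_ediam_ne_top.mp hconn)
    have hofReal : ENNReal.ofReal ((r : ℝ) * G.diam / 2) = (r * G.diam : ℝ≥0∞) / 2 := by
      rw [ENNReal.ofReal_div_of_pos two_pos]
      simp [ENNReal.ofReal_mul]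
    rw [hofReal, ENNReal.le_div_iff_mul_le (by simp) (by simp), mul_comm]
    calc (2 : ℝ≥0∞) * _ ≤ r * G.dist u v :=
          CopDrunk.two_mul_expCaptureTime_greedy_le hconn hreg hr u v
      _ ≤ r * G.diam := by gcongr
  · have hball := G.diam_div_three_add_one_mul_le_card hconn
    rw [hreg.minDegree_eq, hcard] at hball
    have hthird : G.diam + 1 ≤ 3 * (G.diam / 3 + 1) := by omega
    have : r * G.diam < 3 * n := by nlinarith
    have : (r : ℝ) * G.diam < 3 * n := by exact_mod_cast this
    linarith
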